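/- Single-letter identity for the mutual-information difference: Let (X_i, Y_i), i = 1,…,n, be i.i.d. pairs of finite-valued random variables, let K be any finite-valued random variable jointly distributed with (X^n, Y^n), let J be uniformly distributed on {1,…,n} and independent of (K, X^n, Y^n), and set U = (K, X₁,…,X_{J−1}, Y_{J+1},…,Y_n, J). Then I(K;X^n) − I(K;Y^n) = n·[ I(U;X_J) − I(U;Y_J) ]. -/

import Mathlib

open scoped BigOperators Classical

noncomputable section

namespace CRGen

/-- A probability mass function on a finite type. -/
def IsPMF {α : Type*} [Fintype α] (p : α → ℝ) : Prop :=
  (∀ a, 0 ≤ p a) ∧ ∑ a, p a = 1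

/-- Shannon entropy to base 2 of a pmf on a finite type (`0 log 0 = 0`). -/
def entPMF {α : Type*} [Fintype α] (p : α → ℝ) : ℝ :=
  - ∑ a, p a * Real.logb 2 (p a)

/-- Distribution (pushforward pmf) of a random variable on a finite probability
space with pmf `μ`. -/
def dist {Ω α : Type*} [Fintype Ω] (μ : Ω → ℝ) (X : Ω → α) : α → ℝ :=
  fun a => ∑ ω, if X ω = a then μ ω else 0

/-- Shannon entropy (base 2) of a random variable. -/
def H {Ω α : Type*} [Fintype Ω] [Fintype α] (μ : Ω → ℝ) (X : Ω → α) : ℝ :=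
  entPMF (dist μ X)

/-- Conditional entropy `H(X|Y)`. -/
def condH {Ω α β : Type*} [Fintype Ω] [Fintype α] [Fintype β]
    (μ : Ω → ℝ) (X : Ω → α) (Y : Ω → β) : ℝ :=
  H μ (fun ω => (X ω, Y ω)) - H μ Y

/-- Mutual information `I(X;Y)`. -/
def MI {Ω α β : Type*} [Fintype Ω] [Fintype α] [Fintype β]
    (μ : Ω → ℝ) (X : Ω → α) (Y : Ω → β) : ℝ :=
  H μ X + H μ Y - H μ (fun ω => (X ω, Y ω))

/-- Conditional mutual information `I(X;Y|Z)`. -/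
def condMI {Ω α β γ : Type*} [Fintype Ω] [Fintype α] [Fintype β] [Fintype γ]
    (μ : Ω → ℝ) (X : Ω → α) (Y : Ω → β) (Z : Ω → γ) : ℝ :=
  H μ (fun ω => (X ω, Z ω)) + H μ (fun ω => (Y ω, Z ω))
    - H μ (fun ω => (X ω, (Y ω, Z ω))) - H μ Z

/-- First marginal of a joint pmf on a product. -/
def margFst {α β : Type*} [Fintype α] [Fintype β] (q : α × β → ℝ) : α → ℝ :=
  fun a => ∑ b, q (a, b)

/-- Second marginal of a joint pmf on a product. -/
def margSnd {α β : Type*} [Fintype α] [Fintype β] (q : α × β → ℝ) : β → ℝ :=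
  fun b => ∑ a, q (a, b)

/-- Mutual information of a joint pmf on a product. -/
def miPMF {α β : Type*} [Fintype α] [Fintype β] (q : α × β → ℝ) : ℝ :=
  entPMF (margFst q) + entPMF (margSnd q) - entPMF q

/-- The (variable-length) prefix `x₁,…,x_{j−1}` of a vector, encoded as a masked
vector: entries at positions `≥ j` are replaced by `none`. -/
def maskPre {𝒳 : Type} {n : ℕ} (xv : Fin n → 𝒳) (j : Fin n) : Fin n → Option 𝒳 :=
  fun i => if (i : ℕ) < (j : ℕ) then some (xv i) else none

/-- The (variable-length) suffix `y_{j+1},…,y_n` of a vector, encoded as a masked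
vector: entries at positions `≤ j` are replaced by `none`. -/
def maskSuf {𝒴 : Type} {n : ℕ} (yv : Fin n → 𝒴) (j : Fin n) : Fin n → Option 𝒴 :=
  fun i => if (j : ℕ) < (i : ℕ) then some (yv i) else none

/-! Expanding the mutual informations, `H(K)` cancels and the claim splits in two. By the
i.i.d. hypothesis `H(X^n) = n H(X_J)` and `H(Y^n) = n H(Y_J)`. Since `J` is uniform and
independent of the rest, `H(U, X_J) = log n + (1/n) Σ_j H(K, X_1..X_j, Y_{j+1}..Y_n)` and
`H(U, Y_J) = log n + (1/n) Σ_j H(K, X_1..X_{j-1}, Y_j..Y_n)`, so `n (H(U, X_J) - H(U, Y_J))`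
telescopes to `H(K, X^n) - H(K, Y^n)`. -/

section Pushforward

variable {Ω α β : Type*} [Fintype Ω]

lemma dist_comp [Fintype α] (μ : Ω → ℝ) (Z : Ω → α) (g : α → β) :
    dist μ (fun ω => g (Z ω)) = dist (dist μ Z) g := by
  funext b
  have hswap : ∀ a, (if g a = b then ∑ ω, if Z ω = a then μ ω else 0 else 0)
      = ∑ ω, if Z ω = a then (if g a = b then μ ω else 0) else 0 := fun a => by
    split_ifs <;> simp
  simp only [dist, hswap]
  rw [Finset.sum_comm]
  simp

lemma sum_dist (μ : Ω → ℝ) [Fintype α] (X : Ω → α) : ∑ a, dist μ X a = ∑ ω, μ ω := by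
  simp only [dist]
  rw [Finset.sum_comm]
  simp

lemma H_comp [Fintype α] [Fintype β] (μ : Ω → ℝ) (Z : Ω → α) (g : α → β) :
    H μ (fun ω => g (Z ω)) = H (dist μ Z) g :=
  congrArg entPMF (dist_comp μ Z g)

lemma MI_comp {γ : Type*} [Fintype α] [Fintype β] [Fintype γ] (μ : Ω → ℝ) (Z : Ω → α)
    (f : α → β) (g : α → γ) :
    MI μ (fun ω => f (Z ω)) (fun ω => g (Z ω)) = MI (dist μ Z) f g := by
  simp only [MI]
  rw [H_comp μ Z f, H_comp μ Z g, ← H_comp μ Z fun a => (f a, g a)]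

lemma entPMF_dist_of_injective [Fintype α] (p : Ω → ℝ) {g : Ω → α}
    (hg : Function.Injective g) : entPMF (dist p g) = entPMF p := by
  have hval : ∀ ω, dist p g (g ω) = p ω := fun ω => by simp [dist, hg.eq_iff]
  have hzero : ∀ a ∉ Set.range g, dist p g a = 0 := fun a ha =>
    Finset.sum_eq_zero fun ω _ => if_neg fun h => ha ⟨ω, h⟩
  simp only [entPMF]
  congr 1
  exact (Fintype.sum_of_injective g hg _ _ (fun a ha => by simp [hzero a ha])
    fun ω => by rw [hval]).symm

lemma H_comp_of_injective [Fintype α] [Fintype β] (μ : Ω → ℝ) (Z : Ω → α) {g : α → β}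
    (hg : Function.Injective g) : H μ (fun ω => g (Z ω)) = H μ Z := by
  rw [H_comp]
  exact entPMF_dist_of_injective _ hg

lemma exists_eq_comp_of_determines [Nonempty Ω] {A : Ω → α} {B : Ω → β}
    (h : ∀ ω ω', A ω = A ω' → B ω = B ω') : ∃ f : α → β, ∀ ω, B ω = f (A ω) := by
  classical
  refine ⟨fun a => if ha : ∃ ω, A ω = a then B ha.choose else B (Classical.arbitrary Ω),
    fun ω => ?_⟩
  have ha : ∃ ω', A ω' = A ω := ⟨ω, rfl⟩
  simp only [dif_pos ha]
  exact h _ _ ha.choose_spec.symm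

lemma H_eq_of_determines [Fintype α] [Fintype β] (μ : Ω → ℝ) {A : Ω → α} {B : Ω → β}
    (h : ∀ ω ω', A ω = A ω' ↔ B ω = B ω') : H μ A = H μ B := by
  rcases isEmpty_or_nonempty Ω with _ | _
  · simp [H, entPMF, dist]
  obtain ⟨f, hf⟩ := exists_eq_comp_of_determines fun ω ω' => (h ω ω').1
  obtain ⟨g, hg⟩ := exists_eq_comp_of_determines fun ω ω' => (h ω ω').2
  calc H μ A = H μ (fun ω => (A ω, f (A ω))) :=
        (H_comp_of_injective μ A (g := fun a => (a, f a))
          fun _ _ hab => congrArg Prod.fst hab).symm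
    _ = H μ (fun ω => (g (B ω), B ω)) := by
        congr 1
        funext ω
        rw [← hf, ← hg]
    _ = H μ B :=
        H_comp_of_injective μ B (g := fun b => (g b, b)) fun _ _ hab => congrArg Prod.snd hab

end Pushforward

section Entropy

variable {ι α : Type*} [Fintype ι] [Fintype α]

lemma mul_logb_mul (b x y : ℝ) :
    x * y * Real.logb b (x * y) = y * (x * Real.logb b x) + x * (y * Real.logb b y) := by
  rcases eq_or_ne x 0 with rfl | hx
  · simp
  rcases eq_or_ne y 0 with rfl | hy
  · simp
  rw [Real.logb_mul hx hy]
  ring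

lemma entPMF_mixture (w : ι → ℝ) (s : ι → α → ℝ) (hs : ∀ i, ∑ a, s i a = 1) :
    entPMF (fun x : ι × α => w x.1 * s x.1 x.2) = entPMF w + ∑ i, w i * entPMF (s i) := by
  simp only [entPMF, Fintype.sum_prod_type, mul_logb_mul, Finset.sum_add_distrib,
    ← Finset.sum_mul, ← Finset.mul_sum, hs]
  simp only [one_mul, mul_neg, Finset.sum_neg_distrib]
  ring

lemma mul_logb_prod [DecidableEq ι] (b : ℝ) (x : ι → ℝ) :
    (∏ i, x i) * Real.logb b (∏ i, x i)
      = ∑ j, ∏ i, if i = j then x i * Real.logb b (x i) else x i := by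
  by_cases hx : ∀ i, x i ≠ 0
  · rw [Real.logb_prod _ _ fun i _ => hx i, Finset.mul_sum]
    refine Finset.sum_congr rfl fun j _ => ?_
    calc _ = ∏ i, x i * (if i = j then Real.logb b (x i) else 1) := by
          rw [Finset.prod_mul_distrib, Finset.prod_ite_eq']
          simp
      _ = _ := Finset.prod_congr rfl fun i _ => by split_ifs <;> simp
  · push Not at hx
    obtain ⟨k, hk⟩ := hx
    rw [Finset.prod_eq_zero (Finset.mem_univ k) hk, zero_mul]
    exact (Finset.sum_eq_zero fun j _ =>
      Finset.prod_eq_zero (Finset.mem_univ k) (by split_ifs <;> simp [hk])).symm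

lemma entPMF_pi [DecidableEq ι] (r : ι → α → ℝ) (hr : ∀ i, ∑ a, r i a = 1) :
    entPMF (fun v : ι → α => ∏ i, r i (v i)) = ∑ i, entPMF (r i) := by
  simp only [entPMF, mul_logb_prod]
  rw [Finset.sum_comm, Finset.sum_neg_distrib]
  congr 1
  refine Finset.sum_congr rfl fun j _ => ?_
  rw [← Fintype.prod_sum fun i a => if i = j then r i a * Real.logb 2 (r i a) else r i a,
    Finset.prod_eq_single j (fun i _ hij => by simp [hij, hr i]) (by simp)]
  simp

lemma dist_pi_apply [DecidableEq ι] (r : ι → α → ℝ) (hr : ∀ i, ∑ a, r i a = 1) (j : ι) :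
    dist (fun v : ι → α => ∏ i, r i (v i)) (fun v => v j) = r j := by
  funext a
  have hind : ∀ v : ι → α, (if v j = a then ∏ i, r i (v i) else 0)
      = ∏ i, if i = j then (if v i = a then r i (v i) else 0) else r i (v i) := by
    intro v
    by_cases hv : v j = a
    · rw [if_pos hv]
      refine Finset.prod_congr rfl fun i _ => ?_
      split_ifs with hij <;> simp_all
    · rw [if_neg hv]
      exact (Finset.prod_eq_zero (Finset.mem_univ j) (by simp [hv])).symm
  simp only [dist, hind]
  rw [← Fintype.prod_sum fun i c => if i = j then (if c = a then r i c else 0) else r i c,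
    Finset.prod_eq_single j (fun i _ hij => by simp [hij, hr i]) (by simp)]
  simp

end Entropy

def prodPMF {ι τ : Type*} (w : ι → ℝ) (p : τ → ℝ) : ι × τ → ℝ := fun s => w s.1 * p s.2

section IndependentIndex

variable {ι τ β : Type*} [Fintype ι] [Fintype τ]

lemma dist_prodPMF_index (w : ι → ℝ) (p : τ → ℝ) (G : ι → τ → β) (i : ι) (b : β) :
    dist (prodPMF w p) (fun s => (s.1, G s.1 s.2)) (i, b) = w i * dist p (G i) b := by
  simp only [dist, prodPMF, Fintype.sum_prod_type, Prod.mk.injEq, Finset.mul_sum, mul_ite,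
    mul_zero]
  rw [Finset.sum_eq_single i (fun i' _ hi' => by simp [hi']) (by simp)]
  simp

lemma dist_prodPMF (w : ι → ℝ) (p : τ → ℝ) (G : ι → τ → β) (b : β) :
    dist (prodPMF w p) (fun s => G s.1 s.2) b = ∑ i, w i * dist p (G i) b := by
  simp only [dist, prodPMF, Fintype.sum_prod_type, Finset.mul_sum, mul_ite, mul_zero]

lemma H_prodPMF_index [Fintype β] (w : ι → ℝ) {p : τ → ℝ} (hp : ∑ t, p t = 1)
    (G : ι → τ → β) :
    H (prodPMF w p) (fun s => (s.1, G s.1 s.2)) = entPMF w + ∑ i, w i * H p (G i) := by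
  have hdist : dist (prodPMF w p) (fun s => (s.1, G s.1 s.2))
      = fun x : ι × β => w x.1 * dist p (G x.1) x.2 :=
    funext fun x => dist_prodPMF_index w p G x.1 x.2
  rw [H, hdist, entPMF_mixture w _ fun i => (sum_dist p (G i)).trans hp]
  rfl

lemma dist_prodPMF_of_dist_eq {w : ι → ℝ} (hw : ∑ i, w i = 1) (p : τ → ℝ) {G : ι → τ → β}
    {r : β → ℝ} (hG : ∀ i, dist p (G i) = r) :
    dist (prodPMF w p) (fun s => G s.1 s.2) = r := by
  funext b
  simp only [dist_prodPMF, hG, ← Finset.sum_mul, hw, one_mul]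

end IndependentIndex

section Iid

variable {ι α β : Type*} [Fintype ι] [Fintype α] [Fintype β]

lemma dist_fst (q : α × β → ℝ) : dist q Prod.fst = margFst q := by
  funext a
  simp [dist, margFst, Fintype.sum_prod_type_right]

lemma dist_snd (q : α × β → ℝ) : dist q Prod.snd = margSnd q := by
  funext b
  simp [dist, margSnd, Fintype.sum_prod_type]

lemma sum_margFst (q : α × β → ℝ) : ∑ a, margFst q a = ∑ s, q s :=
  (Fintype.sum_prod_type q).symm

lemma sum_margSnd (q : α × β → ℝ) : ∑ b, margSnd q b = ∑ s, q s := by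
  simp only [margSnd]
  rw [Finset.sum_comm, ← Fintype.sum_prod_type]

lemma margFst_iid [DecidableEq ι] (q : α × β → ℝ) :
    margFst (fun s : (ι → α) × (ι → β) => ∏ i, q (s.1 i, s.2 i))
      = fun x => ∏ i, margFst q (x i) := by
  funext x
  exact (Fintype.prod_sum fun i b => q (x i, b)).symm

lemma margSnd_iid [DecidableEq ι] (q : α × β → ℝ) :
    margSnd (fun s : (ι → α) × (ι → β) => ∏ i, q (s.1 i, s.2 i))
      = fun y => ∏ i, margSnd q (y i) := by
  funext y
  exact (Fintype.prod_sum fun i a => q (a, y i)).symm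

end Iid

lemma H_eq_card_mul_H_letter {τ α : Type*} [Fintype τ] [Fintype α] {n : ℕ} (hn : 0 < n)
    (p : τ → ℝ) (V : τ → Fin n → α) {r : α → ℝ} (hr : ∑ a, r a = 1)
    (hV : dist p V = fun v => ∏ i, r (v i)) :
    H p V = n * H (prodPMF (fun _ => 1 / (n : ℝ)) p) (fun s => V s.2 s.1) := by
  have hletter : ∀ j, dist p (fun t => V t j) = r := fun j => by
    rw [dist_comp p V fun v => v j, hV]
    exact dist_pi_apply (fun _ => r) (fun _ => hr) j
  have hw : ∑ _j : Fin n, 1 / (n : ℝ) = 1 := by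
    simp [Finset.card_univ]
    field_simp
  rw [H, hV, entPMF_pi (fun _ => r) fun _ => hr, H, dist_prodPMF_of_dist_eq hw p hletter]
  simp

section Hybrid

variable {κ : Type*} {α β : Type} {n : ℕ}

def prefixMask (m : ℕ) (v : Fin n → α) : Fin n → Option α :=
  fun i => if (i : ℕ) < m then some (v i) else none

def suffixMask (m : ℕ) (v : Fin n → α) : Fin n → Option α :=
  fun i => if m ≤ (i : ℕ) then some (v i) else none

lemma maskPre_eq (v : Fin n → α) (j : Fin n) : maskPre v j = prefixMask j v := rfl

lemma maskSuf_eq (v : Fin n → α) (j : Fin n) : maskSuf v j = suffixMask (j + 1) v := rfl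

lemma prefixMask_eq_iff {m : ℕ} {v w : Fin n → α} :
    prefixMask m v = prefixMask m w ↔ ∀ i : Fin n, (i : ℕ) < m → v i = w i := by
  simp only [prefixMask, funext_iff]
  refine forall_congr' fun i => ?_
  split_ifs <;> simp [*]

lemma suffixMask_eq_iff {m : ℕ} {v w : Fin n → α} :
    suffixMask m v = suffixMask m w ↔ ∀ i : Fin n, m ≤ (i : ℕ) → v i = w i := by
  simp only [suffixMask, funext_iff]
  refine forall_congr' fun i => ?_
  split_ifs <;> simp [*]

lemma prefixMask_succ_eq_iff (j : Fin n) {v w : Fin n → α} :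
    prefixMask (j + 1) v = prefixMask (j + 1) w ↔
      prefixMask j v = prefixMask j w ∧ v j = w j := by
  simp only [prefixMask_eq_iff]
  constructor
  · intro h
    exact ⟨fun i hi => h i (by omega), h j (by omega)⟩
  · rintro ⟨h, hj⟩ i hi
    rcases Nat.lt_succ_iff_lt_or_eq.1 hi with hi | hi
    · exact h i hi
    · rwa [Fin.ext hi]

lemma suffixMask_eq_iff_succ (j : Fin n) {v w : Fin n → α} :
    suffixMask j v = suffixMask j w ↔
      v j = w j ∧ suffixMask (j + 1) v = suffixMask (j + 1) w := by
  simp only [suffixMask_eq_iff]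
  constructor
  · intro h
    exact ⟨h j le_rfl, fun i hi => h i (by omega)⟩
  · rintro ⟨hj, h⟩ i hi
    rcases hi.eq_or_lt with hi | hi
    · rwa [← Fin.ext hi]
    · exact h i hi

def hybrid (m : ℕ) (t : κ × (Fin n → α) × (Fin n → β)) :
    κ × (Fin n → Option α) × (Fin n → Option β) :=
  (t.1, prefixMask m t.2.1, suffixMask m t.2.2)

variable [Fintype κ] [Fintype α] [Fintype β]

lemma H_hybrid_card (p : κ × (Fin n → α) × (Fin n → β) → ℝ) :
    H p (hybrid n) = H p (fun t => (t.1, t.2.1)) :=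
  H_eq_of_determines p fun t t' => by
    simp only [hybrid, Prod.mk.injEq, prefixMask_eq_iff, suffixMask_eq_iff]
    simp [funext_iff]

lemma H_hybrid_zero (p : κ × (Fin n → α) × (Fin n → β) → ℝ) :
    H p (hybrid 0) = H p (fun t => (t.1, t.2.2)) :=
  H_eq_of_determines p fun t t' => by
    simp only [hybrid, Prod.mk.injEq, prefixMask_eq_iff, suffixMask_eq_iff]
    simp [funext_iff]

lemma sum_H_hybrid_succ_sub (p : κ × (Fin n → α) × (Fin n → β) → ℝ) :
    ∑ j : Fin n, (H p (hybrid (j + 1)) - H p (hybrid j))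
      = H p (fun t => (t.1, t.2.1)) - H p (fun t => (t.1, t.2.2)) := by
  rw [Fin.sum_univ_eq_sum_range (fun m => H p (hybrid (m + 1)) - H p (hybrid m)),
    Finset.sum_range_sub fun m => H p (hybrid m), H_hybrid_card, H_hybrid_zero]

end Hybrid

section AuxiliaryVariable

variable {κ : Type*} {α β : Type} {n : ℕ} [Fintype κ] [Fintype α] [Fintype β]

-- A point `(j, k, x, y)` of the sample space stands for `(J, K, X^n, Y^n)`.
abbrev auxU (s : Fin n × κ × (Fin n → α) × (Fin n → β)) :
    κ × (Fin n → Option α) × (Fin n → Option β) × Fin n :=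
  (s.2.1, maskPre s.2.2.1 s.1, maskSuf s.2.2.2 s.1, s.1)

lemma H_auxU_X_letter (w : Fin n → ℝ) {p : κ × (Fin n → α) × (Fin n → β) → ℝ}
    (hp : ∑ t, p t = 1) :
    H (prodPMF w p) (fun s => (auxU s, s.2.2.1 s.1))
      = entPMF w + ∑ j, w j * H p (hybrid (j + 1)) := by
  refine (H_eq_of_determines _ fun s s' => ?_).trans
    (H_prodPMF_index w hp fun j => hybrid (j + 1))
  obtain ⟨j, k, x, y⟩ := s
  obtain ⟨j', k', x', y'⟩ := s'
  simp only [auxU, hybrid, maskPre_eq, maskSuf_eq, Prod.mk.injEq]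
  constructor
  · rintro ⟨⟨rfl, hx, hy, rfl⟩, hxj⟩
    exact ⟨rfl, rfl, (prefixMask_succ_eq_iff _).2 ⟨hx, hxj⟩, hy⟩
  · rintro ⟨rfl, rfl, hx, hy⟩
    obtain ⟨hx, hxj⟩ := (prefixMask_succ_eq_iff _).1 hx
    exact ⟨⟨rfl, hx, hy, rfl⟩, hxj⟩

lemma H_auxU_Y_letter (w : Fin n → ℝ) {p : κ × (Fin n → α) × (Fin n → β) → ℝ}
    (hp : ∑ t, p t = 1) :
    H (prodPMF w p) (fun s => (auxU s, s.2.2.2 s.1))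
      = entPMF w + ∑ j, w j * H p (hybrid j) := by
  refine (H_eq_of_determines _ fun s s' => ?_).trans
    (H_prodPMF_index w hp fun j => hybrid j)
  obtain ⟨j, k, x, y⟩ := s
  obtain ⟨j', k', x', y'⟩ := s'
  simp only [auxU, hybrid, maskPre_eq, maskSuf_eq, Prod.mk.injEq]
  constructor
  · rintro ⟨⟨rfl, hx, hy, rfl⟩, hyj⟩
    exact ⟨rfl, rfl, hx, (suffixMask_eq_iff_succ _).2 ⟨hyj, hy⟩⟩
  · rintro ⟨rfl, rfl, hx, hy⟩
    obtain ⟨hyj, hy⟩ := (suffixMask_eq_iff_succ _).1 hy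
    exact ⟨⟨rfl, hx, hy, rfl⟩, hyj⟩

lemma card_mul_H_auxU_sub (hn : 0 < n) {p : κ × (Fin n → α) × (Fin n → β) → ℝ}
    (hp : ∑ t, p t = 1) :
    n * (H (prodPMF (fun _ => 1 / (n : ℝ)) p) (fun s => (auxU s, s.2.2.1 s.1))
        - H (prodPMF (fun _ => 1 / (n : ℝ)) p) (fun s => (auxU s, s.2.2.2 s.1)))
      = H p (fun t => (t.1, t.2.1)) - H p (fun t => (t.1, t.2.2)) := by
  rw [H_auxU_X_letter _ hp, H_auxU_Y_letter _ hp, ← sum_H_hybrid_succ_sub,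
    Finset.sum_sub_distrib, ← Finset.mul_sum, ← Finset.mul_sum]
  field_simp
  ring

end AuxiliaryVariable

/-- Single-letter identity for the mutual-information difference: with i.i.d.
pairs `(X_i, Y_i) ∼ Q`, any `K`, `J` uniform on `{1,…,n}` and independent of
`(K, X^n, Y^n)`, and `U = (K, X^{J−1}, Y_{J+1}^n, J)`,
`I(K;X^n) − I(K;Y^n) = n·[I(U;X_J) − I(U;Y_J)]`. -/
theorem single_letter_difference_identity
    {Ω 𝒳 𝒴 𝒦 : Type} [Fintype Ω] [Fintype 𝒳] [Fintype 𝒴] [Fintype 𝒦]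
    (μ : Ω → ℝ) (hμ : IsPMF μ) {n : ℕ}
    (Q : 𝒳 × 𝒴 → ℝ) (hQ : IsPMF Q)
    (X : Ω → Fin n → 𝒳) (Y : Ω → Fin n → 𝒴)
    (hiid : ∀ (xv : Fin n → 𝒳) (yv : Fin n → 𝒴),
      dist μ (fun ω => (X ω, Y ω)) (xv, yv) = ∏ i, Q (xv i, yv i))
    (K : Ω → 𝒦) (J : Ω → Fin n)
    (hJ : ∀ (j : Fin n) (t : 𝒦 × (Fin n → 𝒳) × (Fin n → 𝒴)),
      dist μ (fun ω => (J ω, K ω, X ω, Y ω)) (j, t)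
        = (1 / (n : ℝ)) * dist μ (fun ω => (K ω, X ω, Y ω)) t) :
    MI μ K X - MI μ K Y =
      (n : ℝ) * (MI μ
          (fun ω => (K ω, maskPre (X ω) (J ω), maskSuf (Y ω) (J ω), J ω))
          (fun ω => X ω (J ω))
        - MI μ
          (fun ω => (K ω, maskPre (X ω) (J ω), maskSuf (Y ω) (J ω), J ω))
          (fun ω => Y ω (J ω))) := by
  obtain ⟨ω₀, -⟩ := Finset.nonempty_of_sum_ne_zero (hμ.2.symm ▸ one_ne_zero : ∑ ω, μ ω ≠ 0)
  have hn : 0 < n := (J ω₀).pos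
  rw [MI_comp μ (fun ω => (K ω, X ω, Y ω)) (fun t => t.1) (fun t => t.2.1),
    MI_comp μ (fun ω => (K ω, X ω, Y ω)) (fun t => t.1) (fun t => t.2.2),
    MI_comp μ (fun ω => (J ω, K ω, X ω, Y ω)) auxU (fun s => s.2.2.1 s.1),
    MI_comp μ (fun ω => (J ω, K ω, X ω, Y ω)) auxU (fun s => s.2.2.2 s.1)]
  set p := dist μ (fun ω => (K ω, X ω, Y ω))
  have hp : ∑ t, p t = 1 := (sum_dist μ _).trans hμ.2
  have hν : dist μ (fun ω => (J ω, K ω, X ω, Y ω)) = prodPMF (fun _ => 1 / (n : ℝ)) p :=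
    funext fun s => hJ s.1 s.2
  have hpQ : dist p (fun t => t.2) = fun s => ∏ i, Q (s.1 i, s.2 i) := by
    rw [← dist_comp]
    exact funext fun s => hiid s.1 s.2
  have hX : dist p (fun t => t.2.1) = fun x => ∏ i, margFst Q (x i) := by
    rw [dist_comp p (fun t => t.2) Prod.fst, hpQ, dist_fst, margFst_iid]
  have hY : dist p (fun t => t.2.2) = fun y => ∏ i, margSnd Q (y i) := by
    rw [dist_comp p (fun t => t.2) Prod.snd, hpQ, dist_snd, margSnd_iid]
  rw [hν]
  simp only [MI]
  rw [H_eq_card_mul_H_letter hn p _ ((sum_margFst Q).trans hQ.2) hX,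
    H_eq_card_mul_H_letter hn p _ ((sum_margSnd Q).trans hQ.2) hY]
  linear_combination card_mul_H_auxU_sub hn hp

end CRGen
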